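/- arXiv:2605.04889 — 4 statements merged into one kernel-verified Lean document; each statement's English description precedes it below -/
import Mathlib

section
/- Let q be a complex number with 0 < |q| < 1 and let a be a complex number with (aq;q)_m ≠ 0 for all m ≥ 0. Suppose (α_n, β_n)_{n ≥ 0} is a Bailey pair with parameters (a, q). Define α'_r = a^r q^{r²} α_r for all r ≥ 0 and β'_n = ∑_{j=0}^{n} a^j q^{j²} β_j / (q;q)_{n−j} for all n ≥ 0. Then (α'_n, β'_n)_{n ≥ 0} is a Bailey pair with parameters (a, q). -/
open Finset

/-- Finite q-Pochhammer symbol `(x;q)_n`. -/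
noncomputable def qPoch (q x : ℂ) (n : ℕ) : ℂ :=
  ∏ j ∈ Finset.range n, (1 - x * q ^ j)

lemma qPoch_succ (q x : ℂ) (n : ℕ) :
    qPoch q x (n + 1) = qPoch q x n * (1 - x * q ^ n) :=
  Finset.prod_range_succ _ _

lemma qPoch_add (q x : ℂ) (s t : ℕ) :
    qPoch q x (s + t) = qPoch q x s * qPoch q (x * q ^ s) t := by
  unfold qPoch
  rw [Finset.prod_range_add]
  congr 1
  apply Finset.prod_congr rfl
  intro j _
  rw [pow_add]; ring

lemma one_sub_ne {q : ℂ} (hq1 : ‖q‖ < 1) (n : ℕ) : (1 : ℂ) - q * q ^ n ≠ 0 := by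
  intro h
  have h2 : q * q ^ n = 1 := by linear_combination -h
  have hn : ‖q * q ^ n‖ < 1 := by
    rw [← pow_succ', norm_pow]
    exact pow_lt_one₀ (norm_nonneg q) hq1 (Nat.succ_ne_zero n)
  rw [h2, norm_one] at hn
  exact lt_irrefl 1 hn
  
lemma qPoch_q_ne_zero {q : ℂ} (hq1 : ‖q‖ < 1) (n : ℕ) : qPoch q q n ≠ 0 := by
  unfold qPoch
  exact Finset.prod_ne_zero_iff.mpr fun j _ => one_sub_ne hq1 j

lemma key {q : ℂ} (hq0 : q ≠ 0) (hq1 : ‖q‖ < 1) (m : ℕ) : ∀ b : ℂ,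
    ∑ k ∈ Finset.range (m + 1), b ^ k * q ^ (k ^ 2) * qPoch q (b * q ^ (k + 1)) (m - k) /
      (qPoch q q k * qPoch q q (m - k)) = 1 / qPoch q q m := by
  induction m with
  | zero => intro b; simp [qPoch]
  | succ m ih =>
    intro b
    have hD := qPoch_q_ne_zero hq1
    have hne : ∀ j : ℕ, (1 : ℂ) - q * q ^ j ≠ 0 := one_sub_ne hq1
    have h1 : (1 - q * q ^ m) *
        (∑ k ∈ Finset.range (m + 1 + 1), b ^ k * q ^ (k ^ 2) *
          qPoch q (b * q ^ (k + 1)) (m + 1 - k) /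
          (qPoch q q k * qPoch q q (m + 1 - k))) =
        (1 - b * (q * q ^ m)) * (1 / qPoch q q m) +
          b * (q * q ^ m) * (1 / qPoch q q m) := by
      rw [Finset.mul_sum]
      have hsplit : ∀ k ∈ Finset.range (m + 1 + 1),
          (1 - q * q ^ m) * (b ^ k * q ^ (k ^ 2) *
            qPoch q (b * q ^ (k + 1)) (m + 1 - k) /
            (qPoch q q k * qPoch q q (m + 1 - k))) =
          ((1 - q ^ (m + 1 - k)) * (b ^ k * q ^ (k ^ 2) *
            qPoch q (b * q ^ (k + 1)) (m + 1 - k) /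
            (qPoch q q k * qPoch q q (m + 1 - k)))) +
          (q ^ (m + 1 - k) * (1 - q ^ k) * (b ^ k * q ^ (k ^ 2) *
            qPoch q (b * q ^ (k + 1)) (m + 1 - k) /
            (qPoch q q k * qPoch q q (m + 1 - k)))) := by
        intro k hk
        have hk' : k ≤ m + 1 := by simpa [Nat.lt_succ_iff] using hk
        have hq : q ^ (m + 1 - k) * q ^ k = q * q ^ m := by
          rw [← pow_add, Nat.sub_add_cancel hk', ← pow_succ']
        have : (1 : ℂ) - q * q ^ m =
            (1 - q ^ (m + 1 - k)) + q ^ (m + 1 - k) * (1 - q ^ k) := by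
          rw [← hq]; ring
        rw [this]; ring
      rw [Finset.sum_congr rfl hsplit, Finset.sum_add_distrib]
      congr 1
      · -- first sum: (1 - b q^{m+1}) * S(m, b)
        rw [Finset.sum_range_succ]
        have hlast : (1 - q ^ (m + 1 - (m + 1))) * (b ^ (m + 1) * q ^ ((m + 1) ^ 2) *
            qPoch q (b * q ^ (m + 1 + 1)) (m + 1 - (m + 1)) /
            (qPoch q q (m + 1) * qPoch q q (m + 1 - (m + 1)))) = 0 := by
          simp
        rw [hlast, add_zero, ← ih b, Finset.mul_sum]
        apply Finset.sum_congr rfl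
        intro k hk
        have hk' : k ≤ m := by simpa [Nat.lt_succ_iff] using hk
        have e1 : m + 1 - k = (m - k) + 1 := by omega
        rw [e1, qPoch_succ, qPoch_succ]
        have e2 : b * q ^ (k + 1) * q ^ (m - k) = b * (q * q ^ m) := by
          rw [mul_assoc, ← pow_add, show k + 1 + (m - k) = m + 1 from by omega, pow_succ']
        have e3 : q ^ ((m - k) + 1) = q * q ^ (m - k) := pow_succ' q (m - k)
        rw [e2, e3]
        field_simp [hD k, hD (m - k), hne (m - k)]
      · -- second sum: b q^{m+1} * S(m, b*q)
        rw [Finset.sum_range_succ']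
        have hfirst : q ^ (m + 1 - 0) * (1 - q ^ 0) * (b ^ 0 * q ^ (0 ^ 2) *
            qPoch q (b * q ^ (0 + 1)) (m + 1 - 0) /
            (qPoch q q 0 * qPoch q q (m + 1 - 0))) = 0 := by
          simp
        rw [hfirst, add_zero, ← ih (b * q), Finset.mul_sum]
        apply Finset.sum_congr rfl
        intro k hk
        have hk' : k ≤ m := by simpa [Nat.lt_succ_iff] using hk
        have e1 : m + 1 - (k + 1) = m - k := by omega
        have e2 : (k + 1) ^ 2 = k ^ 2 + k + k + 1 := by ring
        have e3 : b * q ^ (k + 1 + 1) = b * q * q ^ (k + 1) := by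
          rw [pow_succ]; ring
        have e4 : q ^ (m - k) = q ^ m / q ^ k := by
          rw [eq_div_iff (pow_ne_zero k hq0), ← pow_add, Nat.sub_add_cancel hk']
        rw [e1, e2, e3, e4, qPoch_succ, pow_add, pow_add, pow_add]
        field_simp [hD k, hD (m - k), hne k, pow_ne_zero k hq0]
        have hinv : (1 - q * q ^ k) * (1 - q * q ^ k)⁻¹ = 1 := mul_inv_cancel₀ (hne k)
        ring_nf
        linear_combination (q ^ (k * 2) * q ^ k ^ 2 * b * b ^ k * qPoch q (q ^ 2 * q ^ k * b) (m - k)) * hinv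
    have h3 : (1 - q * q ^ m) *
        (∑ k ∈ Finset.range (m + 1 + 1), b ^ k * q ^ (k ^ 2) *
          qPoch q (b * q ^ (k + 1)) (m + 1 - k) /
          (qPoch q q k * qPoch q q (m + 1 - k))) * qPoch q q m = 1 := by
      rw [h1]
      field_simp [hD m]
      ring
    rw [qPoch_succ, eq_div_iff (mul_ne_zero (qPoch_q_ne_zero hq1 m) (one_sub_ne hq1 m))]
    linear_combination h3

/-- `(α, β)` is a Bailey pair with parameters `(a, q)` if
`β_n = ∑_{r=0}^n α_r / ((q;q)_{n-r} (aq;q)_{n+r})` for all `n ≥ 0`. -/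
def IsBaileyPair (q a : ℂ) (α β : ℕ → ℂ) : Prop :=
  ∀ n : ℕ, β n = ∑ r ∈ Finset.range (n + 1),
    α r / (qPoch q q (n - r) * qPoch q (a * q) (n + r))

/-- The `ρ₁, ρ₂ → ∞` limiting case of Bailey's lemma (Paule). -/
theorem bailey_lemma_limit (q a : ℂ) (hq0 : 0 < ‖q‖) (hq1 : ‖q‖ < 1)
    (haq : ∀ m : ℕ, qPoch q (a * q) m ≠ 0)
    (α β : ℕ → ℂ) (hpair : IsBaileyPair q a α β) :
    IsBaileyPair q a
      (fun r => a ^ r * q ^ (r ^ 2) * α r)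
      (fun n => ∑ j ∈ Finset.range (n + 1),
        a ^ j * q ^ (j ^ 2) * β j / qPoch q q (n - j)) := by
  intro n
  have hq0' : q ≠ 0 := by
    intro h; rw [h, norm_zero] at hq0; exact lt_irrefl 0 hq0
  have hD := qPoch_q_ne_zero hq1
  simp only []
  set g : ℕ → ℕ → ℂ := fun r j => a ^ j * q ^ (j ^ 2) * α r /
    (qPoch q q (n - j) * (qPoch q q (j - r) * qPoch q (a * q) (j + r))) with hg
  have step1 : ∀ j ∈ Finset.range (n + 1),
      a ^ j * q ^ (j ^ 2) * β j / qPoch q q (n - j) =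
      ∑ r ∈ Finset.range (j + 1), g r j := by
    intro j _
    rw [hpair j, Finset.mul_sum, Finset.sum_div]
    apply Finset.sum_congr rfl
    intro r _
    rw [hg]
    simp only []
    rw [mul_div_assoc', div_div]
    congr 1
    ring
  rw [Finset.sum_congr rfl step1]
  have swap : ∑ j ∈ Finset.range (n + 1), ∑ r ∈ Finset.range (j + 1), g r j =
      ∑ r ∈ Finset.range (n + 1), ∑ j ∈ Finset.Ico r (n + 1), g r j := by
    have := Finset.sum_Ico_Ico_comm 0 (n + 1) g
    rw [Finset.range_eq_Ico]
    simp only [Finset.range_eq_Ico]; rw [← this]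
  rw [swap]
  apply Finset.sum_congr rfl
  intro r hr
  have hrn : r ≤ n := by simpa [Nat.lt_succ_iff] using hr
  rw [Finset.sum_Ico_eq_sum_range, show n + 1 - r = (n - r) + 1 from by omega]
  set m := n - r with hm
  have inner : ∀ k ∈ Finset.range (m + 1), g r (r + k) =
      a ^ r * q ^ (r ^ 2) * α r / qPoch q (a * q) (n + r) *
        ((a * q ^ (2 * r)) ^ k * q ^ (k ^ 2) *
          qPoch q (a * q ^ (2 * r) * q ^ (k + 1)) (m - k) /
          (qPoch q q k * qPoch q q (m - k))) := by
    intro k hk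
    have hkm : k ≤ m := by simpa [Nat.lt_succ_iff] using hk
    have e0 : n - (r + k) = m - k := by omega
    have e1 : r + k - r = k := by omega
    have e2 : r + k + r = 2 * r + k := by omega
    have e3 : n + r = (2 * r + k) + (m - k) := by omega
    have e4 : a * q * q ^ (2 * r + k) = a * q ^ (2 * r) * q ^ (k + 1) := by
      rw [pow_add, pow_succ]; ring
    have hQ : qPoch q (a * q ^ (2 * r) * q ^ (k + 1)) (m - k) ≠ 0 := by
      have h5 := haq ((2 * r + k) + (m - k))
      rw [qPoch_add, e4] at h5
      exact (mul_ne_zero_iff.mp h5).2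
    rw [hg]
    simp only []
    rw [e0, e1, e2, e3, qPoch_add q (a * q) (2 * r + k) (m - k), e4]
    rw [show (r + k) ^ 2 = r ^ 2 + 2 * r * k + k ^ 2 from by ring,
      pow_add, pow_add, pow_add, mul_pow, ← pow_mul]
    field_simp [hD k, hD (m - k), haq (2 * r + k), hQ]
  rw [Finset.sum_congr rfl inner, ← Finset.mul_sum, key hq0' hq1 m (a * q ^ (2 * r)),
    div_mul_div_comm, mul_one, mul_comm (qPoch q (a * q) (n + r)) (qPoch q q m)]
end

section
/- Let q be a complex number with 0 < |q| < 1 and let x be a nonzero complex number. Suppose (α_n, β_n)_{n ≥ 0} is a Bailey pair with parameters (1, q) such that α_0 = 1 and α_n = (−1)^n x^{n²} ((x/q)^n + (x/q)^{−n}) for all n ≥ 1. Define β'_n = q^n β_n for all n ≥ 0, α'_0 = 1, and α'_n = (−1)^n x^{n²} (x^n + x^{−n}) for all n ≥ 1. Then (α'_n, β'_n)_{n ≥ 0} is a Bailey pair with parameters (1, q). (When x = q^A for a real constant A, this says: if α_n = (−1)^n q^{An²}(q^{(A−1)n}+q^{−(A−1)n}) for n > 0, then multiplying β by q^n changes α to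 (−1)^n q^{An²}(q^{An}+q^{−An}) for n > 0.) -/
open Finset

/-- Bressoud–Ismail–Stanton, Proposition 4.1 (with `x = q^A`): if
`α_0 = 1`, `α_n = (-1)^n x^{n²}((x/q)^n + (x/q)^{-n})` for `n ≥ 1`, and `(α, β)` is a
Bailey pair with parameters `(1, q)`, then so is `(α', q^n β_n)` where `α'_0 = 1` and
`α'_n = (-1)^n x^{n²}(x^n + x^{-n})` for `n ≥ 1`. -/
theorem bailey_prop41 (q x : ℂ) (hq0 : 0 < ‖q‖) (hq1 : ‖q‖ < 1) (hx : x ≠ 0)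
    (α β : ℕ → ℂ) (hpair : IsBaileyPair q 1 α β)
    (hα0 : α 0 = 1)
    (hα : ∀ n : ℕ, 1 ≤ n →
      α n = (-1) ^ n * x ^ (n ^ 2) * ((x / q) ^ (n : ℤ) + (x / q) ^ (-(n : ℤ))))
    (α' : ℕ → ℂ) (hα'0 : α' 0 = 1)
    (hα' : ∀ n : ℕ, 1 ≤ n →
      α' n = (-1) ^ n * x ^ (n ^ 2) * (x ^ (n : ℤ) + x ^ (-(n : ℤ)))) :
    IsBaileyPair q 1 α' (fun n => q ^ n * β n) := by
  have hq : q ≠ 0 := by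
    intro h
    rw [h, norm_zero] at hq0
    exact lt_irrefl 0 hq0
  have hqm : ∀ m : ℕ, 1 ≤ m → q ^ m ≠ 1 := by
    intro m hm h
    have h2 : ‖q ^ m‖ < 1 := by
      rw [norm_pow]
      exact pow_lt_one₀ (norm_nonneg q) hq1 (by omega)
    rw [h, norm_one] at h2
    exact lt_irrefl 1 h2
  have hone : ∀ m : ℕ, 1 ≤ m → (1 : ℂ) - q ^ m ≠ 0 := by
    intro m hm h
    exact hqm m hm (by linear_combination -h)
  have hpoch : ∀ m : ℕ, qPoch q q m ≠ 0 := by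
    intro m
    rw [qPoch, Finset.prod_ne_zero_iff]
    intro j _
    have := hone (j + 1) (by omega)
    rwa [pow_succ'] at this
  unfold IsBaileyPair at hpair ⊢
  intro n
  simp only [one_mul] at hpair ⊢
  rw [hpair n, Finset.mul_sum]
  set u : ℕ → ℂ := fun r =>
    (-1 : ℂ) ^ r * x ^ (r ^ 2 + r) * (q ^ (n - r) - 1) /
      (qPoch q q (n - r) * qPoch q q (n + r)) with hu
  set v : ℕ → ℂ := fun r =>
    (-1 : ℂ) ^ r * x ^ (r ^ 2 - r) * (q ^ (n + r) - 1) /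
      (qPoch q q (n - r) * qPoch q q (n + r)) with hv
  have hrec : ∀ m : ℕ, qPoch q q (m + 1) = qPoch q q m * (1 - q ^ (m + 1)) := by
    intro m
    rw [qPoch, qPoch, Finset.prod_range_succ, ← pow_succ']
  have hsub : ∑ r ∈ Finset.range (n + 1),
      (q ^ n * (α r / (qPoch q q (n - r) * qPoch q q (n + r))) -
        α' r / (qPoch q q (n - r) * qPoch q q (n + r))) = 0 := by
    have hterm0 : q ^ n * (α 0 / (qPoch q q (n - 0) * qPoch q q (n + 0))) -
        α' 0 / (qPoch q q (n - 0) * qPoch q q (n + 0)) = u 0 := by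
      simp only [hα0, hα'0, hu, Nat.sub_zero, Nat.add_zero, pow_zero]
      ring
    have hterm : ∀ r < n,
        q ^ n * (α (r + 1) / (qPoch q q (n - (r + 1)) * qPoch q q (n + (r + 1)))) -
          α' (r + 1) / (qPoch q q (n - (r + 1)) * qPoch q q (n + (r + 1))) =
          u (r + 1) + v (r + 1) := by
      intro r hr
      rw [hα (r + 1) (by omega), hα' (r + 1) (by omega)]
      obtain ⟨k, hk⟩ : ∃ k, n = k + (r + 1) := ⟨n - (r + 1), by omega⟩
      obtain ⟨s, hs⟩ : ∃ s, (r + 1) ^ 2 = s + (r + 1) := by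
        refine ⟨(r + 1) ^ 2 - (r + 1), ?_⟩
        have : r + 1 ≤ (r + 1) ^ 2 := Nat.le_self_pow two_ne_zero _
        omega
      subst hk
      have h1 : (r + 1) ^ 2 + (r + 1) = s + (r + 1) + (r + 1) := by omega
      have h2 : (r + 1) ^ 2 - (r + 1) = s := by omega
      simp only [hu, hv, Nat.add_sub_cancel, hs, h1, h2]
      have hpk := hpoch k
      have hpkm := hpoch (k + (r + 1) + (r + 1))
      rw [zpow_natCast, zpow_neg, zpow_natCast, zpow_natCast, zpow_neg, zpow_natCast]
      have hxp : (x : ℂ) ^ (r + 1) ≠ 0 := pow_ne_zero _ hx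
      have hqp : (q : ℂ) ^ (r + 1) ≠ 0 := pow_ne_zero _ hq
      rw [div_pow]
      field_simp
      ring
    have hcancel : ∀ r < n, u r + v (r + 1) = 0 := by
      intro r hr
      obtain ⟨k, hk⟩ : ∃ k, n = k + 1 + r := ⟨n - 1 - r, by omega⟩
      subst hk
      have e1 : k + 1 + r - r = k + 1 := by omega
      have e2 : k + 1 + r - (r + 1) = k := by omega
      have e3 : k + 1 + r + (r + 1) = (k + 1 + r + r) + 1 := by omega
      have e4 : (r + 1) ^ 2 - (r + 1) = r ^ 2 + r := by
        have : (r + 1) ^ 2 = r ^ 2 + 2 * r + 1 := by ring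
        omega
      simp only [hu, hv, e1, e2, e3, e4]
      rw [show k + 1 = k + 1 from rfl, hrec k, hrec (k + 1 + r + r)]
      have hpk := hpoch k
      have hpkr := hpoch (k + 1 + r + r)
      have ho1 := hone (k + 1) (by omega)
      have ho2 := hone (k + 1 + r + r + 1) (by omega)
      field_simp
      ring
    rw [Finset.sum_range_succ']
    rw [hterm0]
    rw [Finset.sum_congr rfl (fun r hr => hterm r (Finset.mem_range.mp hr))]
    rw [Finset.sum_add_distrib]
    have hun : u n = 0 := by
      simp only [hu, Nat.sub_self, pow_zero, sub_self, mul_zero, zero_div]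
    have h5 : ∑ r ∈ Finset.range n, u (r + 1) + u 0 = ∑ r ∈ Finset.range n, u r := by
      rw [← Finset.sum_range_succ', Finset.sum_range_succ, hun, add_zero]
    have h6 : ∑ r ∈ Finset.range n, u r + ∑ r ∈ Finset.range n, v (r + 1) = 0 := by
      rw [← Finset.sum_add_distrib]
      exact Finset.sum_eq_zero (fun r hr => hcancel r (Finset.mem_range.mp hr))
    linear_combination h5 + h6
  rw [Finset.sum_sub_distrib] at hsub
  exact sub_eq_zero.mp hsub
end

section
/- Let q be a complex number with 0 < |q| < 1. Define α_0 = 1, α_n = (−1)^n q^{n(n−1)/2} (1 + q^n) for n ≥ 1, β_0 = 1, and β_n = 0 for n ≥ 1. Then (α_n, β_n)_{n ≥ 0} is a Bailey pair with parameters (1, q); that is, ∑_{r=0}^{n} α_r / ((q;q)_{n−r} (q;q)_{n+r}) equals 1 when n = 0 and equals 0 when n ≥ 1. -/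
open Finset

namespace UBP

noncomputable def G (q : ℂ) : ℕ → ℕ → ℂ
  | 0, 0 => 1
  | 0, _+1 => 0
  | _+1, 0 => 1
  | m+1, k+1 => q ^ (k+1) * G q m (k+1) + G q m k

lemma G_zero_zero (q : ℂ) : G q 0 0 = 1 := rfl
lemma G_zero_succ (q : ℂ) (k : ℕ) : G q 0 (k+1) = 0 := rfl
lemma G_succ_zero (q : ℂ) (m : ℕ) : G q (m+1) 0 = 1 := rfl
lemma G_succ_succ (q : ℂ) (m k : ℕ) :
    G q (m+1) (k+1) = q ^ (k+1) * G q m (k+1) + G q m k := rfl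

lemma G_eq_zero (q : ℂ) : ∀ {m k : ℕ}, m < k → G q m k = 0
  | 0, _+1, _ => rfl
  | m+1, k+1, h => by
      rw [G_succ_succ, G_eq_zero q (by omega : m < k + 1), G_eq_zero q (by omega : m < k)]
      ring

lemma G_self (q : ℂ) : ∀ m : ℕ, G q m m = 1
  | 0 => rfl
  | m+1 => by rw [G_succ_succ, G_eq_zero q (Nat.lt_succ_self m), G_self q m]; ring

lemma P_zero (q : ℂ) : qPoch q q 0 = 1 := by simp [qPoch]
lemma P_succ (q : ℂ) (k : ℕ) : qPoch q q (k+1) = qPoch q q k * (1 - q^(k+1)) := by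
  rw [qPoch, qPoch, prod_range_succ, ← pow_succ']

lemma G_mul (q : ℂ) : ∀ m : ℕ, ∀ k ≤ m,
    G q m k * (qPoch q q k * qPoch q q (m - k)) = qPoch q q m
  | 0, 0, _ => by simp [G_zero_zero, P_zero]
  | m+1, 0, _ => by simp [G_succ_zero, P_zero]
  | m+1, j+1, h => by
      rcases Nat.lt_or_ge (j+1) (m+1) with hlt | hge
      · have hj : j + 1 ≤ m := by omega
        obtain ⟨d, hd⟩ : ∃ d, m - (j+1) = d := ⟨_, rfl⟩
        have h1 := G_mul q m (j+1) hj
        have h2 := G_mul q m j (by omega)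
        rw [hd] at h1
        rw [show m - j = d + 1 by omega] at h2
        rw [G_succ_succ, show m + 1 - (j+1) = d + 1 by omega, P_succ q m,
          P_succ q d, P_succ q j]
        rw [P_succ q d, P_succ q j] at *
        have hm : q ^ (m+1) = q ^ (j+1) * q ^ (d+1) := by
          rw [← pow_add]; congr 1; omega
        rw [hm]
        linear_combination (q^(j+1) * (1 - q^(d+1))) * h1 + (1 - q^(j+1)) * h2
      · have hjm : j = m := by omega
        subst hjm
        rw [G_succ_succ, G_eq_zero q (Nat.lt_succ_self j), G_self q j, Nat.sub_self,
          P_zero]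
        ring
  termination_by m => m

lemma mulpred (k : ℕ) : k * (k - 1) = k * k - k := by
  rcases k with _ | j
  · rfl
  · have h : (j+1) * (j+1) = (j+1) * j + (j+1) := by ring
    simp only [Nat.add_sub_cancel]
    omega

lemma twoT (k : ℕ) : 2 * (k * (k - 1) / 2) = k * (k - 1) := by
  refine Nat.mul_div_cancel' ?_
  rcases k with _ | j
  · simp
  · simpa [Nat.add_sub_cancel, Nat.mul_comm] using (Nat.even_mul_succ_self j).two_dvd

lemma le_sq (k : ℕ) : k ≤ k * k := by
  rcases Nat.eq_zero_or_pos k with h | h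
  · simp [h]
  · exact Nat.le_mul_of_pos_left _ h

lemma Tsucc (k : ℕ) : (k+1) * k / 2 = k * (k - 1) / 2 + k := by
  refine Nat.eq_of_mul_eq_mul_left Nat.zero_lt_two ?_
  rw [Nat.mul_add, twoT]
  have h1 := twoT (k+1)
  simp only [Nat.add_sub_cancel] at h1
  rw [h1, mulpred]
  have h2 := le_sq k
  have h3 : (k+1) * k = k * k + k := by ring
  omega

lemma E1 {r n : ℕ} (h : r ≤ n) :
    (n - r) * ((n - r) - 1) / 2 + (n - r) + n * (n - 1) / 2
      = r * (r - 1) / 2 + n * (n - r) := by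
  refine Nat.eq_of_mul_eq_mul_left Nat.zero_lt_two ?_
  simp only [Nat.mul_add, twoT]
  obtain ⟨s, rfl⟩ := Nat.exists_eq_add_of_le h
  simp only [Nat.add_sub_cancel_left]
  rw [mulpred, mulpred, mulpred]
  have h1 := le_sq s
  have h2 := le_sq r
  have h3 := le_sq (r + s)
  zify [h1, h2, h3]
  ring

lemma E2 (r n : ℕ) :
    (n + r) * ((n + r) - 1) / 2 + (n + r) + n * (n - 1) / 2
      = (r * (r - 1) / 2 + r) + n * (n + r) := by
  refine Nat.eq_of_mul_eq_mul_left Nat.zero_lt_two ?_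
  simp only [Nat.mul_add, twoT]
  rw [mulpred, mulpred, mulpred]
  have h1 := le_sq n
  have h2 := le_sq r
  have h3 := le_sq (n + r)
  zify [h1, h2, h3]
  ring

lemma qdiv {q : ℂ} (hq : q ≠ 0) {a b c d : ℕ} (h : a + d = c + b) :
    q^a / q^b = q^c / q^d := by
  rw [div_eq_div_iff (pow_ne_zero _ hq) (pow_ne_zero _ hq), ← pow_add, ← pow_add, h]

end UBP

namespace UBP2
open UBP

lemma G_zero' {q : ℂ} : ∀ m : ℕ, G q m 0 = 1
  | 0 => rfl
  | _+1 => rfl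

lemma G_symm {q : ℂ} (hP : ∀ k, qPoch q q k ≠ 0) {m k : ℕ} (h : k ≤ m) :
    G q m k = G q m (m - k) := by
  have h1 := G_mul q m k h
  have h2 := G_mul q m (m - k) (Nat.sub_le m k)
  rw [Nat.sub_sub_self h] at h2
  have h3 : G q m k * (qPoch q q k * qPoch q q (m - k))
      = G q m (m - k) * (qPoch q q k * qPoch q q (m - k)) := by
    linear_combination h1 - h2
  exact mul_right_cancel₀ (mul_ne_zero (hP _) (hP _)) h3

lemma qbinom (q : ℂ) : ∀ (m : ℕ) (x : ℂ),
    ∑ k ∈ range (m+1), (-1 : ℂ)^k * q^(k*(k-1)/2) * x^k * G q m k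
      = ∏ j ∈ range m, (1 - x * q^j)
  | 0, x => by simp [G_zero_zero]
  | m+1, x => by
    rw [Finset.sum_range_succ']
    have hA : ∀ k : ℕ,
        (-1 : ℂ)^(k+1) * q^((k+1)*((k+1)-1)/2) * x^(k+1) * G q (m+1) (k+1)
        = (-1 : ℂ)^(k+1) * q^((k+1)*((k+1)-1)/2) * (x*q)^(k+1) * G q m (k+1)
          + (-x) * ((-1 : ℂ)^k * q^(k*(k-1)/2) * (x*q)^k * G q m k) := by
      intro k
      rw [G_succ_succ]
      simp only [Nat.add_sub_cancel, Tsucc, pow_add, pow_succ, mul_pow]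
      ring
    simp only [hA]
    rw [Finset.sum_add_distrib, ← Finset.mul_sum, qbinom q m (x*q)]
    have hB : ∑ k ∈ range (m+1),
        (-1 : ℂ)^(k+1) * q^((k+1)*((k+1)-1)/2) * (x*q)^(k+1) * G q m (k+1)
        = ∑ k ∈ range (m+2), (-1 : ℂ)^k * q^(k*(k-1)/2) * (x*q)^k * G q m k - 1 := by
      rw [Finset.sum_range_succ' (fun k => (-1 : ℂ)^k * q^(k*(k-1)/2) * (x*q)^k * G q m k)]
      simp only [G_zero', pow_zero, mul_one, one_mul, Nat.zero_mul, Nat.zero_div]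
      ring
    rw [hB, Finset.sum_range_succ, G_eq_zero q (Nat.lt_succ_self m), qbinom q m (x*q)]
    rw [prod_range_succ' (fun j => 1 - x * q^j)]
    simp only [pow_zero, mul_one, mul_zero, G_zero']
    have : ∀ j ∈ range m, (1 : ℂ) - x * q^(j+1) = 1 - (x*q) * q^j := by
      intro j _; rw [pow_succ']; ring
    rw [Finset.prod_congr rfl this]
    ring

noncomputable def al (q : ℂ) (r : ℕ) : ℂ :=
  if r = 0 then 1 else (-1 : ℂ)^r * q^(r*(r-1)/2) * (1 + q^r)

noncomputable def tt (q : ℂ) (n k : ℕ) : ℂ :=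
  (-1 : ℂ)^k * q^(k*(k-1)/2) * (q / q^n)^k * G q (2*n) k

lemma t_left {q : ℂ} (hq : q ≠ 0) {n r : ℕ} (h : r ≤ n) :
    tt q n (n - r)
      = (-1 : ℂ)^(n+r) * (q^(r*(r-1)/2) / q^(n*(n-1)/2)) * G q (2*n) (n - r) := by
  have hs : ((-1 : ℂ))^(n-r) = (-1 : ℂ)^(n+r) := by
    rw [show n + r = (n - r) + 2*r by omega, pow_add, pow_mul]; simp
  rw [tt, hs, div_pow, ← pow_mul]
  congr 1
  rw [mul_assoc, mul_div_assoc', ← pow_add, qdiv hq (E1 h)]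

lemma t_right {q : ℂ} (hq : q ≠ 0) (n r : ℕ) :
    tt q n (n + r)
      = (-1 : ℂ)^(n+r) * (q^(r*(r-1)/2 + r) / q^(n*(n-1)/2)) * G q (2*n) (n + r) := by
  rw [tt, div_pow, ← pow_mul]
  congr 1
  rw [mul_assoc, mul_div_assoc', ← pow_add, qdiv hq (E2 r n)]

lemma pair_term {q : ℂ} (hq : q ≠ 0) (hP : ∀ k, qPoch q q k ≠ 0) {n r : ℕ}
    (h1 : 1 ≤ r) (h2 : r ≤ n) :
    tt q n (n - r) + tt q n (n + r)
      = (-1 : ℂ)^n * (q^(n*(n-1)/2))⁻¹ * (al q r * G q (2*n) (n - r)) := by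
  have hsym : G q (2*n) (n + r) = G q (2*n) (n - r) := by
    rw [G_symm hP (by omega : n + r ≤ 2*n), show 2*n - (n+r) = n - r by omega]
  rw [t_left hq h2, t_right hq, hsym, al, if_neg (by omega : ¬ r = 0)]
  rw [pow_add (-1 : ℂ) n r, pow_add q (r*(r-1)/2) r]
  field_simp

lemma center_term {q : ℂ} (hq : q ≠ 0) (n : ℕ) :
    tt q n n = (-1 : ℂ)^n * (q^(n*(n-1)/2))⁻¹ * (al q 0 * G q (2*n) n) := by
  have := t_left hq (Nat.zero_le n)
  simp only [Nat.sub_zero, Nat.add_zero, Nat.zero_mul, Nat.zero_div, pow_zero] at this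
  rw [this, al, if_pos rfl]
  field_simp

lemma sum_range_add' (f : ℕ → ℂ) (m n : ℕ) :
    ∑ i ∈ range (m+n), f i = ∑ i ∈ range m, f i + ∑ i ∈ range n, f (m+i) := by
  induction n with
  | zero => simp
  | succ n ih => rw [← Nat.add_assoc, sum_range_succ, sum_range_succ, ih]; ring

lemma sum_t_eq {q : ℂ} (hq : q ≠ 0) (hP : ∀ k, qPoch q q k ≠ 0) {n : ℕ} (hn : 1 ≤ n) :
    ∑ k ∈ range (2*n+1), tt q n k
      = (-1 : ℂ)^n * (q^(n*(n-1)/2))⁻¹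
          * ∑ r ∈ range (n+1), al q r * G q (2*n) (n - r) := by
  rw [show 2*n+1 = n + (n+1) by ring, sum_range_add' (tt q n) n (n+1)]
  rw [Finset.sum_range_succ' (fun i => tt q n (n + i)) n]
  rw [← Finset.sum_range_reflect (fun k => tt q n k) n]
  rw [Finset.sum_range_succ' (fun r => al q r * G q (2*n) (n - r)) n]
  rw [mul_add, Finset.mul_sum, ← add_assoc, ← Finset.sum_add_distrib]
  congr 1
  · refine Finset.sum_congr rfl fun k hk => ?_
    have hk' : k < n := mem_range.mp hk
    rw [show n - 1 - k = n - (k+1) by omega]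
    exact pair_term hq hP (Nat.le_add_left 1 k) (by omega)
  · rw [Nat.add_zero, Nat.sub_zero]
    exact center_term hq n

lemma sum_t_eq_zero {q : ℂ} (hq : q ≠ 0) {n : ℕ} (hn : 1 ≤ n) :
    ∑ k ∈ range (2*n+1), tt q n k = 0 := by
  have h := qbinom q (2*n) (q / q^n)
  simp only [tt]
  rw [h]
  refine Finset.prod_eq_zero (i := n - 1) (mem_range.mpr (by omega)) ?_
  have hqq : q / q^n * q^(n-1) = 1 := by
    rw [div_mul_eq_mul_div, ← pow_succ', show n - 1 + 1 = n by omega,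
      div_self (pow_ne_zero n hq)]
  rw [hqq]
  ring

lemma key1 {q : ℂ} (hP : ∀ k, qPoch q q k ≠ 0) (n : ℕ) :
    qPoch q q (2*n)
        * ∑ r ∈ range (n+1), al q r / (qPoch q q (n-r) * qPoch q q (n+r))
      = ∑ r ∈ range (n+1), al q r * G q (2*n) (n-r) := by
  rw [Finset.mul_sum]
  refine Finset.sum_congr rfl fun r hr => ?_
  have hr' : r ≤ n := Nat.lt_succ_iff.mp (mem_range.mp hr)
  have hG := G_mul q (2*n) (n-r) (by omega)
  rw [show 2*n - (n-r) = n + r by omega] at hG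
  have hne : qPoch q q (n-r) * qPoch q q (n+r) ≠ 0 := mul_ne_zero (hP _) (hP _)
  rw [← mul_div_assoc, div_eq_iff hne]
  linear_combination (-al q r) * hG

end UBP2

/-- The unit Bailey pair with `a = 1`. -/
theorem unit_bailey_pair (q : ℂ) (hq0 : 0 < ‖q‖) (hq1 : ‖q‖ < 1) :
    IsBaileyPair q 1
      (fun n => if n = 0 then 1 else (-1 : ℂ) ^ n * q ^ (n * (n - 1) / 2) * (1 + q ^ n))
      (fun n => if n = 0 then 1 else 0) := by
  have hq : q ≠ 0 := norm_pos_iff.mp hq0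
  have hfac : ∀ j : ℕ, (1 : ℂ) - q * q ^ j ≠ 0 := by
    intro j hj0
    have h2 : q * q ^ j = 1 := by linear_combination -hj0
    have h1 : ‖q * q ^ j‖ < 1 := by
      rw [norm_mul, norm_pow]
      calc ‖q‖ * ‖q‖ ^ j ≤ ‖q‖ * 1 := by
            gcongr
            exact pow_le_one₀ (norm_nonneg q) hq1.le
        _ = ‖q‖ := mul_one _
        _ < 1 := hq1
    rw [h2] at h1
    simp at h1
  have hP : ∀ k, qPoch q q k ≠ 0 := fun k =>
    Finset.prod_ne_zero_iff.mpr fun j _ => hfac j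
  intro n
  rcases n with _ | m
  · simp [qPoch]
  · simp only [Nat.succ_ne_zero, if_false, one_mul]
    have hS' : ∑ r ∈ range (m+1+1), UBP2.al q r * UBP.G q (2*(m+1)) (m+1-r) = 0 := by
      have h1 := UBP2.sum_t_eq hq hP (n := m+1) (by omega)
      have h2 := UBP2.sum_t_eq_zero hq (n := m+1) (by omega)
      have h3 := h1.symm.trans h2
      have hc : ((-1 : ℂ)^(m+1) * (q ^ ((m+1)*((m+1)-1)/2))⁻¹) ≠ 0 :=
        mul_ne_zero (pow_ne_zero _ (by norm_num)) (inv_ne_zero (pow_ne_zero _ hq))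
      exact (mul_eq_zero.mp h3).resolve_left hc
    have h4 := UBP2.key1 hP (m+1)
    rw [hS'] at h4
    have h5 := (mul_eq_zero.mp h4).resolve_left (hP _)
    simp only [UBP2.al] at h5
    exact h5.symm
end

section
/- Let q be a complex number with 0 < |q| < 1. Define α_0 = 1, α_n = (−1)^n q^{n²} (q^{−n} + q^{n}) for n ≥ 1, and β_n = q^n / (q²;q²)_n for n ≥ 0. Then (α_n, β_n)_{n ≥ 0} is a Bailey pair with parameters (1, q); that is, q^n / (q²;q²)_n = ∑_{r=0}^{n} α_r / ((q;q)_{n−r} (q;q)_{n+r}) for all n ≥ 0. -/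
open Finset

namespace BP

variable {q : ℂ}

/-- Inverse q-Pochhammer `1/(q;q)_m`, extended by zero to negative integer indices. -/
noncomputable def Ee (q : ℂ) (m : ℤ) : ℂ := if 0 ≤ m then (qPoch q q m.toNat)⁻¹ else 0

lemma Ee_neg {m : ℤ} (h : m < 0) : Ee q m = 0 := by simp [Ee, not_le.mpr h]

lemma Ee_coe (m : ℕ) : Ee q (m : ℤ) = (qPoch q q m)⁻¹ := by simp [Ee]

lemma qPoch_succ (x : ℂ) (n : ℕ) : qPoch q x (n+1) = qPoch q x n * (1 - x * q ^ n) :=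
  Finset.prod_range_succ _ _

lemma zpow_comb (hq : q ≠ 0) {a b c : ℤ} (h : a + b = c) : q ^ a * q ^ b = q ^ c := by
  rw [← zpow_add₀ hq, h]

lemma neg_one_zpow_succ (i : ℤ) : (-1 : ℂ) ^ (i + 1) = -((-1:ℂ) ^ i) := by
  rw [zpow_add₀ (by norm_num : (-1:ℂ) ≠ 0), zpow_one]; ring

lemma neg_one_zpow_neg (i : ℤ) : (-1 : ℂ) ^ (-i) = (-1:ℂ) ^ i := by
  have h2 : ((-1:ℂ)) ^ (2 * i) = 1 := by
    rw [zpow_mul]; norm_num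
  calc (-1:ℂ) ^ (-i) = (-1:ℂ) ^ (-i) * ((-1:ℂ)) ^ (2*i) := by rw [h2, mul_one]
  _ = (-1:ℂ) ^ i := zpow_comb (by norm_num) (by ring)

lemma neg_one_zpow_pred (i : ℤ) : (-1 : ℂ) ^ (i - 1) = -((-1:ℂ) ^ i) := by
  have h := neg_one_zpow_neg (1 - i)
  rw [show -(1-i) = i - 1 from by ring] at h
  rw [h, show 1 - i = -i + 1 from by ring, zpow_add₀ (by norm_num : (-1:ℂ) ≠ 0) (-i) 1,
      neg_one_zpow_neg, zpow_one]
  ring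

/-- The fundamental recurrence for the extended inverse Pochhammer, valid for ALL `b : ℤ`. -/
lemma Ekey (hq1 : ∀ k : ℕ, k ≠ 0 → q ^ k ≠ 1) (b : ℤ) :
    Ee q (b - 1) = (1 - q ^ b) * Ee q b := by
  rcases lt_trichotomy b 0 with h | h | h
  · rw [Ee_neg h, Ee_neg (by omega), mul_zero]
  · subst h; rw [Ee_neg (by omega : (0:ℤ) - 1 < 0)]; norm_num
  · obtain ⟨k, rfl⟩ : ∃ k : ℕ, b = (k : ℤ) + 1 := ⟨(b-1).toNat, by omega⟩
    have h1 : ((k:ℤ) + 1) - 1 = ((k:ℕ) : ℤ) := by ring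
    rw [h1, Ee_coe]
    have h2 : ((k:ℤ) + 1) = (((k+1 : ℕ)) : ℤ) := by push_cast; ring
    rw [h2, Ee_coe, zpow_natCast, qPoch_succ]
    have hqq : q * q ^ k = q ^ (k+1) := by rw [pow_succ]; ring
    rw [mul_inv, hqq]
    have hne : (1 : ℂ) - q ^ (k+1) ≠ 0 := by
      intro h; apply hq1 (k+1) (by omega); linear_combination -h
    rw [mul_comm (qPoch q q k)⁻¹ _, ← mul_assoc, mul_inv_cancel₀ hne, one_mul]

/-- q-Pascal identity, variant A. -/
lemma keyPA (q : ℂ) (hq : q ≠ 0) (hq1 : ∀ k : ℕ, k ≠ 0 → q ^ k ≠ 1) (a b : ℤ) :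
    (1 - q ^ (a + b)) * (Ee q a * Ee q b)
      = Ee q (a - 1) * Ee q b + q ^ a * (Ee q a * Ee q (b - 1)) := by
  rw [Ekey hq1 a, Ekey hq1 b, zpow_add₀ hq]; ring

/-- q-Pascal identity, variant B. -/
lemma keyPB (q : ℂ) (hq : q ≠ 0) (hq1 : ∀ k : ℕ, k ≠ 0 → q ^ k ≠ 1) (a b : ℤ) :
    (1 - q ^ (a + b)) * (Ee q a * Ee q b)
      = q ^ b * (Ee q (a - 1) * Ee q b) + Ee q a * Ee q (b - 1) := by
  rw [Ekey hq1 a, Ekey hq1 b, zpow_add₀ hq]; ring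

/-- Generic summand of the sums we manipulate. -/
noncomputable def trm (q : ℂ) (t s : ℤ) (m : ℕ) (j : ℤ) : ℂ :=
  (-1 : ℂ) ^ j * q ^ (j * j + t * j) * (Ee q ((m : ℤ) - s - j) * Ee q ((m : ℤ) + j))

/-- The generic sum. -/
noncomputable def GS (q : ℂ) (t s : ℤ) (m : ℕ) : ℂ :=
  ∑ j ∈ Icc (-(m : ℤ) - 3) ((m : ℤ) + 3), trm q t s m j

lemma trm_eq_zero {t s : ℤ} {m : ℕ} {j : ℤ} (h : j < -(m : ℤ) ∨ (m : ℤ) - s < j) :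
    trm q t s m j = 0 := by
  rcases h with h | h
  · rw [trm, Ee_neg (by omega : (m : ℤ) + j < 0)]; ring
  · rw [trm, Ee_neg (by omega : (m : ℤ) - s - j < 0)]; ring

lemma sum_trm_core {t s : ℤ} {m : ℕ} {A B : ℤ} (hA : A ≤ -(m : ℤ)) (hB : (m : ℤ) - s ≤ B) :
    ∑ j ∈ Icc A B, trm q t s m j = ∑ j ∈ Icc (-(m:ℤ)) ((m:ℤ) - s), trm q t s m j := by
  refine (Finset.sum_subset (Finset.Icc_subset_Icc hA hB) ?_).symm
  intro x hx hnx
  rw [Finset.mem_Icc] at hx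
  rw [Finset.mem_Icc] at hnx
  exact trm_eq_zero (by omega)

lemma sum_trm_eq {t s : ℤ} {m : ℕ} {A B : ℤ} (hs : 0 ≤ s) (hA : A ≤ -(m : ℤ)) (hB : (m : ℤ) - s ≤ B) :
    ∑ j ∈ Icc A B, trm q t s m j = GS q t s m := by
  rw [sum_trm_core hA hB, GS, sum_trm_core (by omega) (by omega : (m : ℤ) - s ≤ (m:ℤ) + 3)]

lemma sum_shift (f : ℤ → ℂ) (a b : ℤ) :
    ∑ j ∈ Icc a b, f j = ∑ j ∈ Icc (a - 1) (b - 1), f (j + 1) := by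
  refine Finset.sum_nbij' (fun j => j - 1) (fun j => j + 1) ?_ ?_ ?_ ?_ ?_ <;>
    intros <;> simp_all [Finset.mem_Icc] <;> omega

lemma sum_shift' (f : ℤ → ℂ) (a b : ℤ) :
    ∑ j ∈ Icc a b, f j = ∑ j ∈ Icc (a + 1) (b + 1), f (j - 1) := by
  refine Finset.sum_nbij' (fun j => j + 1) (fun j => j - 1) ?_ ?_ ?_ ?_ ?_ <;>
    intros <;> simp_all [Finset.mem_Icc] <;> omega

lemma sum_negidx (f : ℤ → ℂ) (a b : ℤ) :
    ∑ j ∈ Icc a b, f j = ∑ j ∈ Icc (-b) (-a), f (-j) := by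
  refine Finset.sum_nbij' (fun j => -j) (fun j => -j) ?_ ?_ ?_ ?_ ?_ <;>
    intros <;> simp_all [Finset.mem_Icc] <;> omega

lemma merge1 (hq : q ≠ 0) (c P : ℂ) {A B C D : ℤ} (h : A + B = C + D) :
    c * q ^ A * (q ^ B * P) = q ^ C * (c * q ^ D * P) := by
  have hemerge : q ^ A * q ^ B = q ^ C * q ^ D := by
    rw [← zpow_add₀ hq, ← zpow_add₀ hq, h]
  calc c * q ^ A * (q ^ B * P) = (q ^ A * q ^ B) * (c * P) := by ring
  _ = (q ^ C * q ^ D) * (c * P) := by rw [hemerge]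
  _ = q ^ C * (c * q ^ D * P) := by ring

lemma merge0 (hq : q ≠ 0) (c P : ℂ) {A C D : ℤ} (h : A = C + D) :
    c * q ^ A * P = q ^ C * (c * q ^ D * P) := by
  rw [h, zpow_add₀ hq]; ring

lemma GS_sym (t : ℤ) (m : ℕ) : GS q t 0 m = GS q (-t) 0 m := by
  rw [GS, sum_negidx, show -((m:ℤ)+3) = -(m:ℤ)-3 from by ring,
      show -(-(m:ℤ)-3) = (m:ℤ)+3 from by ring]
  refine Finset.sum_congr rfl fun j _ => ?_
  simp only [trm, neg_one_zpow_neg]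
  rw [show (-j)*(-j) + t*(-j) = j*j + (-t)*j from by ring,
      show (m:ℤ) - 0 - -j = (m:ℤ) + j from by ring,
      show (m:ℤ) + -j = (m:ℤ) - 0 - j from by ring]
  ring

lemma step1 (hq : q ≠ 0) (hq1 : ∀ k : ℕ, k ≠ 0 → q ^ k ≠ 1) (t : ℤ) (m : ℕ) :
    (1 - q ^ (2*(m:ℤ))) * GS q t 0 m
      = GS q t 1 m - q ^ (t + (m:ℤ)) * GS q (t+1) 1 m := by
  have perj : ∀ j ∈ Icc (-(m:ℤ)-3) ((m:ℤ)+3), (1 - q ^ (2*(m:ℤ))) * trm q t 0 m j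
      = trm q t 1 m j
        + (-1:ℂ)^j * q^(j*j+t*j) * (q^((m:ℤ)-j) * (Ee q ((m:ℤ)-j) * Ee q ((m:ℤ)+j-1))) := by
    intro j _
    have key := keyPA q hq hq1 ((m:ℤ)-j) ((m:ℤ)+j)
    rw [show ((m:ℤ)-j)+((m:ℤ)+j) = 2*(m:ℤ) from by ring,
        show (m:ℤ)-j-1 = (m:ℤ)-1-j from by ring] at key
    simp only [trm]
    rw [show (m:ℤ)-0-j = (m:ℤ)-j from by ring]
    linear_combination ((-1:ℂ)^j * q^(j*j+t*j)) * key
  rw [GS, Finset.mul_sum, Finset.sum_congr rfl perj, Finset.sum_add_distrib]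
  have h1 : ∑ j ∈ Icc (-(m:ℤ)-3) ((m:ℤ)+3), trm q t 1 m j = GS q t 1 m :=
    sum_trm_eq (by norm_num) (by omega) (by omega)
  have h2 : ∑ j ∈ Icc (-(m:ℤ)-3) ((m:ℤ)+3),
      (-1:ℂ)^j * q^(j*j+t*j) * (q^((m:ℤ)-j) * (Ee q ((m:ℤ)-j) * Ee q ((m:ℤ)+j-1)))
      = -(q ^ (t + (m:ℤ)) * GS q (t+1) 1 m) := by
    rw [sum_shift]
    have perj2 : ∀ j ∈ Icc (-(m:ℤ)-3-1) ((m:ℤ)+3-1),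
        (-1:ℂ)^(j+1) * q^((j+1)*(j+1)+t*(j+1))
          * (q^((m:ℤ)-(j+1)) * (Ee q ((m:ℤ)-(j+1)) * Ee q ((m:ℤ)+(j+1)-1)))
        = -(q ^ (t + (m:ℤ)) * trm q (t+1) 1 m j) := by
      intro j _
      rw [neg_one_zpow_succ,
          show (m:ℤ)+(j+1)-1 = (m:ℤ)+j from by ring,
          show (m:ℤ)-(j+1) = (m:ℤ)-1-j from by ring,
          merge1 hq (-((-1:ℂ)^j)) (Ee q ((m:ℤ)-1-j) * Ee q ((m:ℤ)+j))
            (show ((j+1)*(j+1)+t*(j+1)) + ((m:ℤ)-1-j) = (t+(m:ℤ)) + (j*j+(t+1)*j) from by ring)]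
      simp only [trm]
      ring
    rw [Finset.sum_congr rfl perj2, Finset.sum_neg_distrib,
        ← Finset.mul_sum, sum_trm_eq (by norm_num) (by omega) (by omega)]
  rw [h1, h2]; ring

lemma step2B (hq : q ≠ 0) (hq1 : ∀ k : ℕ, k ≠ 0 → q ^ k ≠ 1) (t : ℤ) (m : ℕ) :
    (1 - q ^ (2*(m:ℤ)+1)) * GS q t 1 (m+1)
      = GS q t 0 m - q ^ ((m:ℤ)+1-t) * GS q (t-1) 0 m := by
  have perj : ∀ j ∈ Icc (-((m+1:ℕ):ℤ)-3) (((m+1:ℕ):ℤ)+3),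
      (1 - q ^ (2*(m:ℤ)+1)) * trm q t 1 (m+1) j
      = trm q t 0 m j
        + (-1:ℂ)^j * q^(j*j+t*j) * (q^((m:ℤ)+1+j) * (Ee q ((m:ℤ)-1-j) * Ee q ((m:ℤ)+1+j))) := by
    intro j _
    have key := keyPB q hq hq1 ((m:ℤ)-j) ((m:ℤ)+1+j)
    rw [show ((m:ℤ)-j)+((m:ℤ)+1+j) = 2*(m:ℤ)+1 from by ring,
        show (m:ℤ)-j-1 = (m:ℤ)-1-j from by ring,
        show (m:ℤ)+1+j-1 = (m:ℤ)+j from by ring] at key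
    simp only [trm]
    push_cast
    rw [show (m:ℤ)+1-1-j = (m:ℤ)-j from by ring,
        show (m:ℤ)-0-j = (m:ℤ)-j from by ring]
    linear_combination ((-1:ℂ)^j * q^(j*j+t*j)) * key
  rw [GS, Finset.mul_sum, Finset.sum_congr rfl perj, Finset.sum_add_distrib]
  have h1 : ∑ j ∈ Icc (-((m+1:ℕ):ℤ)-3) (((m+1:ℕ):ℤ)+3), trm q t 0 m j = GS q t 0 m :=
    sum_trm_eq (by norm_num) (by push_cast; omega) (by push_cast; omega)
  have h2 : ∑ j ∈ Icc (-((m+1:ℕ):ℤ)-3) (((m+1:ℕ):ℤ)+3),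
      (-1:ℂ)^j * q^(j*j+t*j) * (q^((m:ℤ)+1+j) * (Ee q ((m:ℤ)-1-j) * Ee q ((m:ℤ)+1+j)))
      = -(q ^ ((m:ℤ)+1-t) * GS q (t-1) 0 m) := by
    rw [sum_shift']
    have perj2 : ∀ j ∈ Icc (-((m+1:ℕ):ℤ)-3+1) (((m+1:ℕ):ℤ)+3+1),
        (-1:ℂ)^(j-1) * q^((j-1)*(j-1)+t*(j-1))
          * (q^((m:ℤ)+1+(j-1)) * (Ee q ((m:ℤ)-1-(j-1)) * Ee q ((m:ℤ)+1+(j-1))))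
        = -(q ^ ((m:ℤ)+1-t) * trm q (t-1) 0 m j) := by
      intro j _
      rw [neg_one_zpow_pred,
          show (m:ℤ)-1-(j-1) = (m:ℤ)-0-j from by ring,
          show (m:ℤ)+1+(j-1) = (m:ℤ)+j from by ring,
          merge1 hq (-((-1:ℂ)^j)) (Ee q ((m:ℤ)-0-j) * Ee q ((m:ℤ)+j))
            (show ((j-1)*(j-1)+t*(j-1)) + ((m:ℤ)+j) = ((m:ℤ)+1-t) + (j*j+(t-1)*j) from by ring)]
      simp only [trm]
      ring
    rw [Finset.sum_congr rfl perj2, Finset.sum_neg_distrib,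
        ← Finset.mul_sum, sum_trm_eq (by norm_num) (by push_cast; omega) (by push_cast; omega)]
  rw [h1, h2]; ring

lemma step2A (hq : q ≠ 0) (hq1 : ∀ k : ℕ, k ≠ 0 → q ^ k ≠ 1) (t : ℤ) (m : ℕ) :
    (1 - q ^ (2*(m:ℤ)+1)) * GS q t 1 (m+1)
      = q ^ ((m:ℤ)) * GS q (t-1) 0 m - q ^ (1-t) * GS q (t-2) 0 m := by
  have perj : ∀ j ∈ Icc (-((m+1:ℕ):ℤ)-3) (((m+1:ℕ):ℤ)+3),
      (1 - q ^ (2*(m:ℤ)+1)) * trm q t 1 (m+1) j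
      = (-1:ℂ)^j * q^(j*j+t*j) * (Ee q ((m:ℤ)-1-j) * Ee q ((m:ℤ)+1+j))
        + q ^ ((m:ℤ)) * trm q (t-1) 0 m j := by
    intro j _
    have key := keyPA q hq hq1 ((m:ℤ)-j) ((m:ℤ)+1+j)
    rw [show ((m:ℤ)-j)+((m:ℤ)+1+j) = 2*(m:ℤ)+1 from by ring,
        show (m:ℤ)-j-1 = (m:ℤ)-1-j from by ring,
        show (m:ℤ)+1+j-1 = (m:ℤ)+j from by ring] at key
    have hm : q^(j*j+t*j) * q^((m:ℤ)-j) = q^((m:ℤ)) * q^(j*j+(t-1)*j) := by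
      rw [← zpow_add₀ hq, ← zpow_add₀ hq]
      congr 1; ring
    simp only [trm]
    push_cast
    rw [show (m:ℤ)+1-1-j = (m:ℤ)-j from by ring,
        show (m:ℤ)-0-j = (m:ℤ)-j from by ring]
    linear_combination ((-1:ℂ)^j * q^(j*j+t*j)) * key
      + ((-1:ℂ)^j * (Ee q ((m:ℤ)-j) * Ee q ((m:ℤ)+j))) * hm
  rw [GS, Finset.mul_sum, Finset.sum_congr rfl perj, Finset.sum_add_distrib]
  have h2 : ∑ j ∈ Icc (-((m+1:ℕ):ℤ)-3) (((m+1:ℕ):ℤ)+3), q ^ ((m:ℤ)) * trm q (t-1) 0 m j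
      = q ^ ((m:ℤ)) * GS q (t-1) 0 m := by
    rw [← Finset.mul_sum, sum_trm_eq (by norm_num) (by push_cast; omega) (by push_cast; omega)]
  have h1 : ∑ j ∈ Icc (-((m+1:ℕ):ℤ)-3) (((m+1:ℕ):ℤ)+3),
      (-1:ℂ)^j * q^(j*j+t*j) * (Ee q ((m:ℤ)-1-j) * Ee q ((m:ℤ)+1+j))
      = -(q ^ (1-t) * GS q (t-2) 0 m) := by
    rw [sum_shift']
    have perj2 : ∀ j ∈ Icc (-((m+1:ℕ):ℤ)-3+1) (((m+1:ℕ):ℤ)+3+1),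
        (-1:ℂ)^(j-1) * q^((j-1)*(j-1)+t*(j-1))
          * (Ee q ((m:ℤ)-1-(j-1)) * Ee q ((m:ℤ)+1+(j-1)))
        = -(q ^ (1-t) * trm q (t-2) 0 m j) := by
      intro j _
      rw [neg_one_zpow_pred,
          show (m:ℤ)-1-(j-1) = (m:ℤ)-0-j from by ring,
          show (m:ℤ)+1+(j-1) = (m:ℤ)+j from by ring,
          merge0 hq (-((-1:ℂ)^j)) (Ee q ((m:ℤ)-0-j) * Ee q ((m:ℤ)+j))
            (show ((j-1)*(j-1)+t*(j-1)) = (1-t) + (j*j+(t-2)*j) from by ring)]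
      simp only [trm]
      ring
    rw [Finset.sum_congr rfl perj2, Finset.sum_neg_distrib,
        ← Finset.mul_sum, sum_trm_eq (by norm_num) (by push_cast; omega) (by push_cast; omega)]
  rw [h1, h2]; ring

lemma GS_val (hq : q ≠ 0) (hq1 : ∀ k : ℕ, k ≠ 0 → q ^ k ≠ 1) :
    ∀ m : ℕ, GS q 1 0 m = q ^ (m:ℤ) * (qPoch (q^2) (q^2) m)⁻¹
      ∧ GS q 0 0 m = (qPoch (q^2) (q^2) m)⁻¹ := by
  intro m
  induction m with
  | zero =>
      have hbase : ∀ t : ℤ, GS q t 0 0 = 1 := by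
        intro t
        rw [← sum_trm_eq (le_refl 0) (by norm_num) (by norm_num) (A := 0) (B := 0)]
        rw [Finset.Icc_self, Finset.sum_singleton]
        norm_num [trm, Ee, qPoch]
      constructor <;> simp [hbase, qPoch]
  | succ m ih =>
      obtain ⟨hA, hC⟩ := ih
      set D := (qPoch (q^2) (q^2) m)⁻¹ with hDdef
      have hne1 : (1:ℂ) - q ^ (2*(m:ℤ)+1) ≠ 0 := by
        have e : q ^ (2*(m:ℤ)+1) = q ^ (2*m+1) := by
          rw [show (2*(m:ℤ)+1) = ((2*m+1 : ℕ) : ℤ) from by push_cast; ring, zpow_natCast]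
        rw [e]; exact sub_ne_zero.mpr (Ne.symm (hq1 (2*m+1) (by omega)))
      have hne2 : (1:ℂ) - q ^ (2*(m:ℤ)+2) ≠ 0 := by
        have e : q ^ (2*(m:ℤ)+2) = q ^ (2*m+2) := by
          rw [show (2*(m:ℤ)+2) = ((2*m+2 : ℕ) : ℤ) from by push_cast; ring, zpow_natCast]
        rw [e]; exact sub_ne_zero.mpr (Ne.symm (hq1 (2*m+2) (by omega)))
      have hpoch : (qPoch (q^2) (q^2) (m+1))⁻¹ = D * (1 - q ^ (2*(m:ℤ)+2))⁻¹ := by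
        rw [qPoch_succ, mul_inv, hDdef]
        congr 2
        have e1 : q^2*(q^2)^m = q^(2*m+2 : ℕ) := by
          rw [← pow_mul, ← pow_add]; congr 1; omega
        rw [e1, show (2*(m:ℤ)+2) = ((2*m+2 : ℕ) : ℤ) from by push_cast; ring, zpow_natCast]
      have hX : GS q 1 1 (m+1) = 0 := by
        have h := step2B hq hq1 1 m
        rw [show (1:ℤ)-1 = 0 from by norm_num, hA, hC] at h
        have h0 : (1 - q ^ (2*(m:ℤ)+1)) * GS q 1 1 (m+1) = 0 := by
          rw [h, show (m:ℤ)+1-1 = (m:ℤ) from by ring]; ring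
        exact (mul_eq_zero.mp h0).resolve_left hne1
      have hY : GS q 2 1 (m+1) = -(q ^ (-1:ℤ) * D) := by
        apply mul_left_cancel₀ hne1
        have h := step2A hq hq1 2 m
        rw [show (2:ℤ)-1 = 1 from by norm_num, show (2:ℤ)-2 = 0 from by norm_num,
            show (1:ℤ)-2 = -1 from by norm_num, hA, hC] at h
        rw [h]
        have e1 : q ^ (2*(m:ℤ)+1) * q^(-1:ℤ) = q^(m:ℤ) * q^(m:ℤ) := by
          rw [← zpow_add₀ hq, ← zpow_add₀ hq]; congr 1; ring
        linear_combination (-D) * e1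
      have hU : GS q 0 1 (m+1) = D := by
        apply mul_left_cancel₀ hne1
        have h := step2B hq hq1 0 m
        have hsym : GS q (0-1 : ℤ) 0 m = q^(m:ℤ) * D := by
          rw [show (0:ℤ)-1 = -1 from by norm_num, ← GS_sym 1 m]; exact hA
        rw [hC, hsym, show (m:ℤ)+1-0 = (m:ℤ)+1 from by ring] at h
        rw [h]
        have e2 : q ^ ((m:ℤ)+1) * q^(m:ℤ) = q^(2*(m:ℤ)+1) := zpow_comb hq (by ring)
        linear_combination (-D) * e2
      constructor
      · have h := step1 hq hq1 1 (m+1)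
        rw [show (1:ℤ)+1 = 2 from by norm_num,
            show (2*(((m+1:ℕ)):ℤ)) = 2*(m:ℤ)+2 from by push_cast; ring, hX, hY] at h
        apply mul_left_cancel₀ hne2
        rw [h, hpoch]
        have e3 : q ^ ((1:ℤ)+((m+1:ℕ):ℤ)) * q^(-1:ℤ) = q ^ (((m+1:ℕ)):ℤ) :=
          zpow_comb hq (by ring)
        have ec : (1 - q^(2*(m:ℤ)+2)) * (q^(((m+1:ℕ)):ℤ) * (D * (1 - q^(2*(m:ℤ)+2))⁻¹))
            = q^(((m+1:ℕ)):ℤ) * D := by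
          have hh : (1 - q^(2*(m:ℤ)+2)) * (q^(((m+1:ℕ)):ℤ) * (D * (1 - q^(2*(m:ℤ)+2))⁻¹))
              = ((1 - q^(2*(m:ℤ)+2)) * (1 - q^(2*(m:ℤ)+2))⁻¹) * (q^(((m+1:ℕ)):ℤ) * D) := by
            ring
          rw [hh, mul_inv_cancel₀ hne2, one_mul]
        linear_combination D * e3 - ec
      · have h := step1 hq hq1 0 (m+1)
        rw [show (0:ℤ)+1 = 1 from by norm_num,
            show (2*(((m+1:ℕ)):ℤ)) = 2*(m:ℤ)+2 from by push_cast; ring, hX, hU] at h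
        apply mul_left_cancel₀ hne2
        rw [h, hpoch]
        have ec : (1 - q^(2*(m:ℤ)+2)) * (D * (1 - q^(2*(m:ℤ)+2))⁻¹) = D := by
          have hh : (1 - q^(2*(m:ℤ)+2)) * (D * (1 - q^(2*(m:ℤ)+2))⁻¹)
              = ((1 - q^(2*(m:ℤ)+2)) * (1 - q^(2*(m:ℤ)+2))⁻¹) * D := by ring
          rw [hh, mul_inv_cancel₀ hne2, one_mul]
        linear_combination -ec

lemma sum_range_toIcc (f : ℤ → ℂ) (n : ℕ) :
    ∑ r ∈ range (n+1), f (r:ℤ) = ∑ j ∈ Icc (0:ℤ) (n:ℤ), f j := by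
  refine Finset.sum_nbij' (fun r => (r:ℤ)) (fun j => j.toNat) ?_ ?_ ?_ ?_ ?_ <;>
    intros <;> simp_all [Finset.mem_Icc, Finset.mem_range] <;> omega

lemma sum_IccN_toIcc (f : ℤ → ℂ) (a b : ℕ) :
    ∑ r ∈ Icc a b, f (r:ℤ) = ∑ j ∈ Icc (a:ℤ) (b:ℤ), f j := by
  refine Finset.sum_nbij' (fun r => (r:ℤ)) (fun j => j.toNat) ?_ ?_ ?_ ?_ ?_ <;>
    intros <;> simp_all [Finset.mem_Icc] <;> omega

lemma bridge (hq : q ≠ 0) (n : ℕ) :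
    ∑ r ∈ range (n+1),
      (if r = 0 then (1:ℂ) else (-1 : ℂ) ^ r * q ^ (r ^ 2) * (q ^ (-(r : ℤ)) + q ^ (r : ℤ)))
        / (qPoch q q (n - r) * qPoch q q (n + r))
      = GS q 1 0 n := by
  have per_r : ∀ r ∈ range (n+1),
      (if r = 0 then (1:ℂ) else (-1 : ℂ) ^ r * q ^ (r ^ 2) * (q ^ (-(r : ℤ)) + q ^ (r : ℤ)))
        / (qPoch q q (n - r) * qPoch q q (n + r))
      = trm q 1 0 n (r:ℤ) + (if r = 0 then 0 else trm q 1 0 n (-(r:ℤ))) := by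
    intro r hr
    rw [Finset.mem_range] at hr
    have hrn : r ≤ n := by omega
    have hEa : Ee q ((n:ℤ) - 0 - (r:ℤ)) = (qPoch q q (n-r))⁻¹ := by
      rw [show (n:ℤ) - 0 - (r:ℤ) = ((n-r:ℕ):ℤ) from by omega, Ee_coe]
    have hEb : Ee q ((n:ℤ) + (r:ℤ)) = (qPoch q q (n+r))⁻¹ := by
      rw [show (n:ℤ) + (r:ℤ) = ((n+r:ℕ):ℤ) from by omega, Ee_coe]
    by_cases h0 : r = 0
    · subst h0
      simp only [if_pos rfl, trm, Nat.cast_zero]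
      rw [show (n:ℤ) - 0 - 0 = ((n:ℕ):ℤ) from by omega, Ee_coe,
          show (n:ℤ) + 0 = ((n:ℕ):ℤ) from by omega, Ee_coe]
      norm_num [Nat.sub_zero]
    · rw [if_neg h0, if_neg h0]
      simp only [trm]
      have hEc : Ee q ((n:ℤ) - 0 - -(r:ℤ)) = (qPoch q q (n+r))⁻¹ := by
        rw [show (n:ℤ) - 0 - -(r:ℤ) = ((n+r:ℕ):ℤ) from by omega, Ee_coe]
      have hEd : Ee q ((n:ℤ) + -(r:ℤ)) = (qPoch q q (n-r))⁻¹ := by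
        rw [show (n:ℤ) + -(r:ℤ) = ((n-r:ℕ):ℤ) from by omega, Ee_coe]
      rw [hEa, hEb, hEc, hEd, neg_one_zpow_neg, zpow_natCast (-1:ℂ) r]
      have hq2 : q ^ (r^2) = q ^ ((r:ℤ)*(r:ℤ)) := by
        rw [show ((r:ℤ)*(r:ℤ)) = ((r^2 : ℕ):ℤ) from by push_cast; ring, zpow_natCast]
      rw [hq2, div_eq_mul_inv, mul_inv]
      have e1 : q ^ ((r:ℤ)*(r:ℤ)) * q ^ (-(r:ℤ)) = q ^ ((-(r:ℤ))*(-(r:ℤ)) + 1*(-(r:ℤ))) :=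
        zpow_comb hq (by ring)
      have e2 : q ^ ((r:ℤ)*(r:ℤ)) * q ^ ((r:ℤ)) = q ^ ((r:ℤ)*(r:ℤ) + 1*(r:ℤ)) :=
        zpow_comb hq (by ring)
      linear_combination ((-1:ℂ)^r * ((qPoch q q (n-r))⁻¹ * (qPoch q q (n+r))⁻¹)) * (e1 + e2)
  rw [Finset.sum_congr rfl per_r, Finset.sum_add_distrib]
  have hsum1 : ∑ r ∈ range (n+1), trm q 1 0 n (r:ℤ) = ∑ j ∈ Icc (0:ℤ) (n:ℤ), trm q 1 0 n j :=
    sum_range_toIcc _ n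
  have hsum2 : ∑ r ∈ range (n+1), (if r = 0 then 0 else trm q 1 0 n (-(r:ℤ)))
      = ∑ j ∈ Icc (1:ℤ) (n:ℤ), trm q 1 0 n (-j) := by
    have hsub : ∑ r ∈ Icc 1 n, (if r = 0 then (0:ℂ) else trm q 1 0 n (-(r:ℤ)))
        = ∑ r ∈ range (n+1), (if r = 0 then 0 else trm q 1 0 n (-(r:ℤ))) := by
      apply Finset.sum_subset
      · intro x hx; rw [Finset.mem_Icc] at hx; rw [Finset.mem_range]; omega
      · intro x hx hnx
        rw [Finset.mem_range] at hx; rw [Finset.mem_Icc] at hnx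
        rw [if_pos (by omega)]
    calc ∑ r ∈ range (n+1), (if r = 0 then (0:ℂ) else trm q 1 0 n (-(r:ℤ)))
        = ∑ r ∈ Icc 1 n, (if r = 0 then (0:ℂ) else trm q 1 0 n (-(r:ℤ))) := hsub.symm
      _ = ∑ r ∈ Icc 1 n, trm q 1 0 n (-(r:ℤ)) :=
          Finset.sum_congr rfl (fun r hr => by
            rw [Finset.mem_Icc] at hr; rw [if_neg (by omega)])
      _ = ∑ j ∈ Icc ((1:ℕ):ℤ) ((n:ℕ):ℤ), trm q 1 0 n (-j) :=
          sum_IccN_toIcc (fun j => trm q 1 0 n (-j)) 1 n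
      _ = ∑ j ∈ Icc (1:ℤ) (n:ℤ), trm q 1 0 n (-j) := by norm_num
  rw [hsum1, hsum2]
  have hGS : GS q 1 0 n = ∑ j ∈ Icc (-(n:ℤ)) ((n:ℤ)), trm q 1 0 n j :=
    (sum_trm_eq (by norm_num) (le_refl _) (by omega)).symm
  have hunion : Finset.Icc (-(n:ℤ)) ((n:ℤ)) = Finset.Icc (-(n:ℤ)) (-1) ∪ Finset.Icc 0 ((n:ℤ)) := by
    ext j; simp only [Finset.mem_Icc, Finset.mem_union]; omega
  have hdisj : Disjoint (Finset.Icc (-(n:ℤ)) (-1)) (Finset.Icc 0 ((n:ℤ))) := by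
    rw [Finset.disjoint_left]
    intro a ha hb
    rw [Finset.mem_Icc] at ha hb; omega
  have hneg : ∑ j ∈ Icc (-(n:ℤ)) (-1), trm q 1 0 n j
      = ∑ j ∈ Icc (1:ℤ) ((n:ℤ)), trm q 1 0 n (-j) := by
    have h := sum_negidx (trm q 1 0 n) (-(n:ℤ)) (-1)
    rw [show -(-1:ℤ) = 1 from by norm_num, show -(-(n:ℤ)) = (n:ℤ) from by norm_num] at h
    exact h
  rw [hGS, hunion, Finset.sum_union hdisj, hneg]
  ring

end BP

/-- The Bailey pair `(α_n^{(1)}, β_n^{(1)})`: `α_0 = 1`,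
`α_n = (-1)^n q^{n²}(q^{-n} + q^n)` for `n ≥ 1`, and `β_n = q^n / (q²;q²)_n`. -/
theorem bailey_pair_one (q : ℂ) (hq0 : 0 < ‖q‖) (hq1 : ‖q‖ < 1) :
    IsBaileyPair q 1
      (fun n => if n = 0 then 1 else
        (-1 : ℂ) ^ n * q ^ (n ^ 2) * (q ^ (-(n : ℤ)) + q ^ (n : ℤ)))
      (fun n => q ^ n / qPoch (q ^ 2) (q ^ 2) n) := by
  have hq : q ≠ 0 := by
    intro h; rw [h] at hq0; simp at hq0
  have hq1' : ∀ k : ℕ, k ≠ 0 → q ^ k ≠ 1 := by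
    intro k hk hcontra
    have h : ‖q ^ k‖ < 1 := by
      rw [norm_pow]; exact pow_lt_one₀ (norm_nonneg q) hq1 hk
    rw [hcontra] at h; norm_num at h
  intro n
  dsimp only
  simp only [one_mul]
  rw [div_eq_mul_inv, ← zpow_natCast q n, ← (BP.GS_val hq hq1' n).1]
  exact (BP.bridge hq n).symm
end
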